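/- Let $\nu$ be a measure on $\mathbb{R}^d$ with $\nu(\{0\})=0$, and define $\mathcal{A}_1(\nu)(B) = \int_{\mathbb{R}^d \setminus \{0\}} \int_0^{|x|^{1/2}} \frac{2}{\pi}(|x| - r^2)^{-1/2} 1_B(r x/|x|)\,dr\,\nu(dx)$. Then $\mathcal{A}_1(\nu)$ is a L\'evy measure (i.e. $\int (1 \wedge |y|^2)\,\mathcal{A}_1(\nu)(dy) < \infty$) if and only if $\int_{\mathbb{R}^d} (1 \wedge |x|)\,\nu(dx) < \infty$. -/

import Mathlib

open MeasureTheory Real Set ENNReal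

variable {d : ℕ}

/-- The arcsine transformation `𝒜ₖ` of a measure on `ℝᵈ` (for `k = 1, 2`):
`𝒜ₖ(ν)(B) = ∫ ν(dx) ∫₀^{|x|^{k/2}} (2/π)(|x|^k - r²)^{-1/2} 1_B(r x/|x|) dr`. -/
noncomputable def arcsineT (k : ℝ) (ν : Measure (EuclideanSpace ℝ (Fin d))) :
    Measure (EuclideanSpace ℝ (Fin d)) :=
  (ν.restrict {(0 : EuclideanSpace ℝ (Fin d))}ᶜ).bind fun x =>
    Measure.map (fun r : ℝ => (r / ‖x‖) • x)
      ((volume.restrict (Set.Ioo (0 : ℝ) (‖x‖ ^ (k / 2)))).withDensity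
        (fun r => ENNReal.ofReal (2 / Real.pi * (‖x‖ ^ k - r ^ 2) ^ (-(1/2) : ℝ))))

/-! Disintegrating `𝒜₁(ν)` over `ν`, the integral of `1 ∧ |y|²` becomes
`∫ J(|x|) ν(dx)` with `J(s) = ∫₀^{√s} a₁(r; s) (1 ∧ r²) dr`. Since `(2/π) arcsin (r/√s)` is an
antiderivative of `a₁(·; s)`, the arcsine law is a probability on `(0, √s)` giving mass `2/3` to
`(√s/2, √s)`. There `1 ∧ r²` lies between `(1 ∧ s)/4` and `1 ∧ s`, so
`(1 ∧ s)/6 ≤ J(s) ≤ 1 ∧ s`, and the two integrals are comparable. -/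

open intervalIntegral

/-- `a₁(r; s)`, without the indicator of `0 < r < √s`. -/
noncomputable def arcsineDensity (s r : ℝ) : ℝ := 2 / π * (s - r ^ 2) ^ (-(1/2) : ℝ)

lemma hasDerivAt_arcsin_div_sqrt {s r : ℝ} (hr : r ^ 2 < s) :
    HasDerivAt (fun t => 2 / π * arcsin (t / √s)) (arcsineDensity s r) r := by
  have hs : 0 < s := (sq_nonneg r).trans_lt hr
  have hsq : 0 < √s := sqrt_pos.2 hs
  have hlt : |r / √s| < 1 := by
    rw [abs_div, abs_of_pos hsq, div_lt_one hsq, ← sqrt_sq_eq_abs]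
    exact sqrt_lt_sqrt (sq_nonneg r) hr
  have h := ((hasDerivAt_arcsin (abs_lt.1 hlt).1.ne' (abs_lt.1 hlt).2.ne).comp r
    ((hasDerivAt_id r).div_const √s)).const_mul (2 / π)
  refine h.congr_deriv ?_
  have hsr : 0 < s - r ^ 2 := sub_pos.2 hr
  unfold arcsineDensity
  rw [rpow_neg hsr.le, ← sqrt_eq_rpow, div_pow, sq_sqrt hs.le]
  field_simp
  rw [sqrt_div hsr.le, div_mul_cancel₀ _ hsq.ne']

lemma sq_lt_of_mem_Ioo_of_le_sqrt {s a b r : ℝ} (ha : 0 ≤ a) (hb : b ≤ √s)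
    (hr : r ∈ Ioo a b) : r ^ 2 < s :=
  (lt_sqrt (ha.trans hr.1.le)).1 (hr.2.trans_le hb)

lemma arcsineDensity_nonneg {s r : ℝ} (hr : r ^ 2 < s) : 0 ≤ arcsineDensity s r :=
  mul_nonneg (by positivity) (rpow_nonneg (sub_pos.2 hr).le _)

lemma integrableOn_arcsineDensity {s a b : ℝ} (ha : 0 ≤ a) (hb : b ≤ √s) :
    IntegrableOn (arcsineDensity s) (Ioc a b) :=
  integrableOn_deriv_of_nonneg (g := fun t => 2 / π * arcsin (t / √s)) (by fun_prop)
    (fun r hr => hasDerivAt_arcsin_div_sqrt (sq_lt_of_mem_Ioo_of_le_sqrt ha hb hr))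
    fun r hr => arcsineDensity_nonneg (sq_lt_of_mem_Ioo_of_le_sqrt ha hb hr)

lemma integral_arcsineDensity {s a b : ℝ} (ha : 0 ≤ a) (hab : a ≤ b) (hb : b ≤ √s) :
    ∫ r in a..b, arcsineDensity s r = 2 / π * (arcsin (b / √s) - arcsin (a / √s)) := by
  rw [integral_eq_sub_of_hasDerivAt_of_le hab (by fun_prop)
    (fun r hr => hasDerivAt_arcsin_div_sqrt (sq_lt_of_mem_Ioo_of_le_sqrt ha hb hr))
    ((intervalIntegrable_iff_integrableOn_Ioc_of_le hab).2 (integrableOn_arcsineDensity ha hb)),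
    mul_sub]

lemma lintegral_arcsineDensity {s a b : ℝ} (ha : 0 ≤ a) (hab : a ≤ b) (hb : b ≤ √s) :
    ∫⁻ r in Ioo a b, ENNReal.ofReal (arcsineDensity s r) =
      ENNReal.ofReal (2 / π * (arcsin (b / √s) - arcsin (a / √s))) := by
  rw [← integral_arcsineDensity ha hab hb, intervalIntegral.integral_of_le hab,
    integral_Ioc_eq_integral_Ioo, ofReal_integral_eq_lintegral_ofReal
      ((integrableOn_arcsineDensity ha hb).mono_set Ioo_subset_Ioc_self)]
  exact (ae_restrict_iff' measurableSet_Ioo).2 (ae_of_all _ fun r hr =>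
    arcsineDensity_nonneg (sq_lt_of_mem_Ioo_of_le_sqrt ha hb hr))

lemma arcsin_inv_two : arcsin 2⁻¹ = π / 6 := by
  rw [← one_div, ← sin_pi_div_six, arcsin_sin] <;> linarith [pi_pos]

lemma lintegral_arcsineDensity_eq_one {s : ℝ} (hs : 0 < s) :
    ∫⁻ r in Ioo 0 √s, ENNReal.ofReal (arcsineDensity s r) = 1 := by
  rw [lintegral_arcsineDensity le_rfl (sqrt_nonneg s) le_rfl, div_self (sqrt_pos.2 hs).ne',
    zero_div, arcsin_one, arcsin_zero, sub_zero, ← ofReal_one]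
  congr 1
  field_simp

@[fun_prop]
lemma measurable_arcsineDensity (s : ℝ) : Measurable (arcsineDensity s) := by
  unfold arcsineDensity; fun_prop

lemma lintegral_arcsineDensity_mul_min_one_sq_le {s : ℝ} (hs : 0 < s) :
    ∫⁻ r in Ioo 0 √s, ENNReal.ofReal (arcsineDensity s r) * ENNReal.ofReal (min 1 (r ^ 2)) ≤
      ENNReal.ofReal (min 1 s) :=
  calc _ ≤ ∫⁻ r in Ioo 0 √s, ENNReal.ofReal (arcsineDensity s r) * ENNReal.ofReal (min 1 s) :=
        setLIntegral_mono (by fun_prop) fun r hr =>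
          by gcongr; exact (sq_lt_of_mem_Ioo_of_le_sqrt le_rfl le_rfl hr).le
    _ = ENNReal.ofReal (min 1 s) := by
        rw [lintegral_mul_const _ (by fun_prop),
          lintegral_arcsineDensity_eq_one hs, one_mul]

lemma min_one_le_six_mul_lintegral_arcsineDensity_mul_min_one_sq {s : ℝ} (hs : 0 < s) :
    ENNReal.ofReal (min 1 s) ≤
        6 * ∫⁻ r in Ioo 0 √s,
        ENNReal.ofReal (arcsineDensity s r) * ENNReal.ofReal (min 1 (r ^ 2)) := by
  have hsq : 0 < √s := sqrt_pos.2 hs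
  have hmass : ∫⁻ r in Ioo (√s / 2) √s, ENNReal.ofReal (arcsineDensity s r) =
      ENNReal.ofReal (2 / 3) := by
    rw [lintegral_arcsineDensity (by positivity) (by linarith) le_rfl, div_self hsq.ne',
      div_div_cancel_left' hsq.ne', arcsin_one, arcsin_inv_two]
    congr 1; field_simp; ring
  have hmin : ∀ r ∈ Ioo (√s / 2) √s, min 1 s / 4 ≤ min 1 (r ^ 2) := by
    intro r hr
    have : s / 4 < r ^ 2 := by nlinarith [sq_sqrt hs.le, hr.1]
    exact le_min (by linarith [min_le_left 1 s]) (by linarith [min_le_right 1 s])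
  calc ENNReal.ofReal (min 1 s)
      = 6 * (ENNReal.ofReal (2 / 3) * ENNReal.ofReal (min 1 s / 4)) := by
        rw [← ofReal_mul (by norm_num), ← ofReal_ofNat, ← ofReal_mul (by norm_num)]
        congr 1; ring
    _ = 6 * ∫⁻ r in Ioo (√s / 2) √s,
          ENNReal.ofReal (arcsineDensity s r) * ENNReal.ofReal (min 1 s / 4) := by
        rw [lintegral_mul_const _ (by fun_prop), hmass]
    _ ≤ 6 * ∫⁻ r in Ioo (√s / 2) √s,
          ENNReal.ofReal (arcsineDensity s r) * ENNReal.ofReal (min 1 (r ^ 2)) := by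
        gcongr 6 * ?_
        exact setLIntegral_mono (by fun_prop) fun r hr => by gcongr; exact hmin r hr
    _ ≤ _ := by
        gcongr 6 * ?_
        exact lintegral_mono_set (Ioo_subset_Ioo_left (by positivity))

section Kernel

variable {E : Type*} [NormedAddCommGroup E] [NormedSpace ℝ E] [MeasurableSpace E] [BorelSpace E]

noncomputable def arcsineKernel (k : ℝ) (x : E) : Measure E :=
  Measure.map (fun r : ℝ => (r / ‖x‖) • x)
    ((volume.restrict (Ioo (0 : ℝ) (‖x‖ ^ (k / 2)))).withDensity
      fun r => ENNReal.ofReal (2 / π * (‖x‖ ^ k - r ^ 2) ^ (-(1/2) : ℝ)))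

lemma arcsineT_eq_bind (k : ℝ) (ν : Measure (EuclideanSpace ℝ (Fin d))) :
    arcsineT k ν = (ν.restrict {0}ᶜ).bind (arcsineKernel k) :=
  rfl

lemma lintegral_arcsineKernel (k : ℝ) (x : E) {f : E → ℝ≥0∞} (hf : Measurable f) :
    ∫⁻ y, f y ∂arcsineKernel k x = ∫⁻ r in Ioo 0 (‖x‖ ^ (k / 2)),
      ENNReal.ofReal (2 / π * (‖x‖ ^ k - r ^ 2) ^ (-(1/2) : ℝ)) * f ((r / ‖x‖) • x) := by
  rw [arcsineKernel, lintegral_map hf (by fun_prop),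
    lintegral_withDensity_eq_lintegral_mul _ (by fun_prop) (by fun_prop)]
  rfl

lemma measurable_arcsineKernel (k : ℝ) : Measurable (arcsineKernel (E := E) k) := by
  refine Measure.measurable_of_measurable_coe _ fun t ht => ?_
  have hind : Measurable (t.indicator (1 : E → ℝ≥0∞)) := measurable_one.indicator ht
  let S : Set (E × ℝ) := {p | p.2 ∈ Ioo 0 (‖p.1‖ ^ (k / 2))}
  let F : E × ℝ → ℝ≥0∞ := fun p =>
    ENNReal.ofReal (2 / π * (‖p.1‖ ^ k - p.2 ^ 2) ^ (-(1/2) : ℝ)) *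
      t.indicator 1 ((p.2 / ‖p.1‖) • p.1)
  have hS : MeasurableSet S :=
    (measurableSet_lt measurable_const measurable_snd).inter
      (measurableSet_lt measurable_snd (by fun_prop))
  have hF : Measurable F := by
    have := hind.comp ((measurable_snd.div measurable_fst.norm).smul measurable_fst)
    fun_prop
  have hκ : ∀ x, arcsineKernel k x t = ∫⁻ r, S.indicator F (x, r) := fun x => by
    rw [← lintegral_indicator_one ht, lintegral_arcsineKernel k x hind,
      ← lintegral_indicator measurableSet_Ioo]
    rfl
  simpa only [hκ] using (hF.indicator hS).lintegral_prod_right'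

lemma lintegral_comp_norm_arcsineKernel_one {x : E} (hx : x ≠ 0) {g : ℝ → ℝ≥0∞}
    (hg : Measurable g) :
    ∫⁻ y, g ‖y‖ ∂arcsineKernel 1 x =
      ∫⁻ r in Ioo 0 √‖x‖, ENNReal.ofReal (arcsineDensity ‖x‖ r) * g r := by
  have hx0 : 0 < ‖x‖ := norm_pos_iff.2 hx
  rw [lintegral_arcsineKernel 1 x (f := fun y => g ‖y‖) (by fun_prop), sqrt_eq_rpow,
    Real.rpow_one]
  refine setLIntegral_congr_fun measurableSet_Ioo fun r hr => ?_
  rw [norm_smul, norm_div, norm_norm, Real.norm_of_nonneg hr.1.le, div_mul_cancel₀ _ hx0.ne']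
  rfl

end Kernel

theorem arcsineT_one_levyMeasure_iff_general (ν : Measure (EuclideanSpace ℝ (Fin d))) :
    (∫⁻ y, ENNReal.ofReal (min 1 (‖y‖ ^ 2)) ∂(arcsineT 1 ν) < ⊤) ↔
      (∫⁻ x, ENNReal.ofReal (min 1 ‖x‖) ∂ν < ⊤) := by
  set J : ℝ → ℝ≥0∞ := fun s =>
    ∫⁻ r in Ioo 0 √s, ENNReal.ofReal (arcsineDensity s r) * ENNReal.ofReal (min 1 (r ^ 2))
  have hT : ∫⁻ y, ENNReal.ofReal (min 1 (‖y‖ ^ 2)) ∂(arcsineT 1 ν) =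
      ∫⁻ x in {0}ᶜ, J ‖x‖ ∂ν := by
    rw [arcsineT_eq_bind, Measure.lintegral_bind (measurable_arcsineKernel 1).aemeasurable
      (by fun_prop)]
    exact setLIntegral_congr_fun (measurableSet_singleton 0).compl fun x hx =>
      lintegral_comp_norm_arcsineKernel_one hx (g := fun t => ENNReal.ofReal (min 1 (t ^ 2)))
        (by fun_prop)
  have hcompl : ∫⁻ x, ENNReal.ofReal (min 1 ‖x‖) ∂ν =
      ∫⁻ x in {0}ᶜ, ENNReal.ofReal (min 1 ‖x‖) ∂ν :=
    (setLIntegral_eq_of_support_subset fun x hx => by rintro rfl; simp at hx).symm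
  have hupper : ∫⁻ y, ENNReal.ofReal (min 1 (‖y‖ ^ 2)) ∂(arcsineT 1 ν) ≤
      ∫⁻ x, ENNReal.ofReal (min 1 ‖x‖) ∂ν := by
    rw [hT, hcompl]
    exact setLIntegral_mono (by fun_prop) fun x hx =>
      lintegral_arcsineDensity_mul_min_one_sq_le (norm_pos_iff.2 hx)
  have hlower : ∫⁻ x, ENNReal.ofReal (min 1 ‖x‖) ∂ν ≤
      6 * ∫⁻ y, ENNReal.ofReal (min 1 (‖y‖ ^ 2)) ∂(arcsineT 1 ν) := by
    rw [hT, hcompl, ← lintegral_const_mul' _ _ (by norm_num)]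
    exact setLIntegral_mono' (measurableSet_singleton 0).compl fun x hx =>
      min_one_le_six_mul_lintegral_arcsineDensity_mul_min_one_sq (norm_pos_iff.2 hx)
  exact ⟨fun h => hlower.trans_lt (mul_lt_top (by norm_num) h), hupper.trans_lt⟩

theorem arcsineT_one_levyMeasure_iff (ν : Measure (EuclideanSpace ℝ (Fin d)))
    (hν : ν {0} = 0) :
    (∫⁻ y, ENNReal.ofReal (min 1 (‖y‖ ^ 2)) ∂(arcsineT 1 ν) < ⊤) ↔
      (∫⁻ x, ENNReal.ofReal (min 1 ‖x‖) ∂ν < ⊤) :=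
  arcsineT_one_levyMeasure_iff_general ν
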